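/- arXiv:2404.09131 — 2 statements merged into one kernel-verified Lean document; each statement's English description precedes it below -/
import Mathlib

section
/- Let X, G ∈ ℂ^{n×p} with Xᴴ X = I_p, and let X̄, Ḡ ∈ ℝ^{2n×2p} denote their real representations (where X̄ = [[Re(X), Im(X)], [−Im(X), Re(X)]]). Then the real representation of the complex projection (I − X Xᴴ) G + X·skew_ℂ(Xᴴ G), with skew_ℂ(M) = ½(M − Mᴴ), equals the real projection (I − X̄ X̄ᵀ) Ḡ + X̄·skew_ℝ(X̄ᵀ Ḡ), with skew_ℝ(M) = ½(M − Mᵀ). In other words, the real representation map intertwines the tangent-space projection on the complex Stiefel manifold with the tangent-space projection on its real representation. -/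
open Matrix

/-- The real representation of a complex matrix `X` as the block matrix
`[[Re X, Im X], [-Im X, Re X]]`. -/
def realRep {n p : ℕ} (X : Matrix (Fin n) (Fin p) ℂ) :
    Matrix (Fin n ⊕ Fin n) (Fin p ⊕ Fin p) ℝ :=
  Matrix.fromBlocks (X.map Complex.re) (X.map Complex.im)
    (-(X.map Complex.im)) (X.map Complex.re)

/-- `skew M = ½(M - Mᴴ)` for a complex square matrix. -/
noncomputable def skewC {q : Type*} [Fintype q] (M : Matrix q q ℂ) : Matrix q q ℂ :=
  (1 / 2 : ℂ) • (M - Mᴴ)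

/-- `skew M = ½(M - Mᵀ)` for a real square matrix. -/
noncomputable def skewR {q : Type*} [Fintype q] (M : Matrix q q ℝ) : Matrix q q ℝ :=
  (1 / 2 : ℝ) • (M - Mᵀ)

lemma map_re_mul {n m p : ℕ} (X : Matrix (Fin n) (Fin m) ℂ) (Y : Matrix (Fin m) (Fin p) ℂ) :
    (X * Y).map Complex.re =
      X.map Complex.re * Y.map Complex.re - X.map Complex.im * Y.map Complex.im := by
  ext i j
  simp [Matrix.mul_apply, Matrix.map_apply, Complex.mul_re, Finset.sum_sub_distrib]

lemma map_im_mul {n m p : ℕ} (X : Matrix (Fin n) (Fin m) ℂ) (Y : Matrix (Fin m) (Fin p) ℂ) :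
    (X * Y).map Complex.im =
      X.map Complex.re * Y.map Complex.im + X.map Complex.im * Y.map Complex.re := by
  ext i j
  simp [Matrix.mul_apply, Matrix.map_apply, Complex.mul_im, Finset.sum_add_distrib]

lemma realRep_mul {n m p : ℕ} (X : Matrix (Fin n) (Fin m) ℂ) (Y : Matrix (Fin m) (Fin p) ℂ) :
    realRep (X * Y) = realRep X * realRep Y := by
  simp only [realRep, Matrix.fromBlocks_multiply, map_re_mul, map_im_mul]
  congr 1 <;> simp [Matrix.mul_neg, Matrix.neg_mul, sub_eq_add_neg] <;> abel

lemma realRep_add {n p : ℕ} (X Y : Matrix (Fin n) (Fin p) ℂ) :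
    realRep (X + Y) = realRep X + realRep Y := by
  ext (i | i) (j | j) <;> simp [realRep, Matrix.fromBlocks] <;> ring

lemma realRep_sub {n p : ℕ} (X Y : Matrix (Fin n) (Fin p) ℂ) :
    realRep (X - Y) = realRep X - realRep Y := by
  ext (i | i) (j | j) <;> simp [realRep, Matrix.fromBlocks] <;> ring

lemma realRep_one {n : ℕ} : realRep (1 : Matrix (Fin n) (Fin n) ℂ) = 1 := by
  ext (i | i) (j | j) <;> simp [realRep, Matrix.fromBlocks, Matrix.one_apply] <;>
    split <;> simp_all

lemma realRep_conjTranspose {n p : ℕ} (X : Matrix (Fin n) (Fin p) ℂ) :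
    realRep Xᴴ = (realRep X)ᵀ := by
  ext (i | i) (j | j) <;> simp [realRep, Matrix.fromBlocks, Matrix.conjTranspose_apply]

lemma realRep_smul {n p : ℕ} (r : ℝ) (X : Matrix (Fin n) (Fin p) ℂ) :
    realRep ((r : ℂ) • X) = r • realRep X := by
  ext (i | i) (j | j) <;> simp [realRep, Matrix.fromBlocks]

theorem stmt_7 (n p : ℕ) (X G : Matrix (Fin n) (Fin p) ℂ)
    (hX : Xᴴ * X = 1) :
    realRep ((1 - X * Xᴴ) * G + X * skewC (Xᴴ * G)) =
      (1 - realRep X * (realRep X)ᵀ) * realRep G +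
        realRep X * skewR ((realRep X)ᵀ * realRep G) := by
  have h2 : (1 / 2 : ℂ) = ((1 / 2 : ℝ) : ℂ) := by norm_num
  rw [skewC, skewR, h2, Matrix.mul_smul, Matrix.mul_smul]
  simp only [realRep_add, realRep_sub, realRep_mul, realRep_one, realRep_smul,
    realRep_conjTranspose, conjTranspose_mul, conjTranspose_conjTranspose,
    transpose_mul, transpose_transpose]
end

section
/- Let (Ω, F, ℙ) be a probability space with a filtration (F_n)_{n∈ℕ}, and let (X_n)_{n∈ℕ} be a nonnegative, integrable stochastic process adapted to (F_n) such that ∑_{n=0}^∞ 𝔼[ max(𝔼[X_{n+1} − X_n | F_n], 0) ] < ∞ (bounded positive variations). Then (X_n) is a quasimartingale, i.e. ∑_{n=0}^∞ 𝔼[ |𝔼[X_{n+1} − X_n | F_n]| ] < ∞, and X_n converges almost surely. -/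
/-!
Write `Y n = 𝔼[X (n+1) - X n | ℱ n]`. Since `|Y| = 2 Y⁺ - Y` and `∑_{k<N} 𝔼 Y k = 𝔼 X N - 𝔼 X 0`,
nonnegativity of `X` bounds the partial sums of `𝔼 |Y k|` by `2 ∑ 𝔼 Y⁺ + 𝔼 X 0`, so `X` is a
quasimartingale. In the Doob decomposition `X = M + A`, `A n = ∑_{k<n} Y k`, the predictable part
then converges absolutely a.e., and the martingale part is bounded in `L¹` by
`sup_n ‖X n‖₁ + ∑ ‖Y k‖₁`, hence converges a.e. by the martingale convergence theorem.
-/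

open MeasureTheory Filter
open scoped NNReal ENNReal Topology

namespace MeasureTheory

variable {Ω : Type*} {m0 : MeasurableSpace Ω} {μ : Measure Ω}

lemma integral_abs_eq_two_mul_integral_max_sub {f : Ω → ℝ} (hf : Integrable f μ) :
    ∫ ω, |f ω| ∂μ = 2 * ∫ ω, max (f ω) 0 ∂μ - ∫ ω, f ω ∂μ := by
  have hpointwise : ∀ x : ℝ, |x| = 2 * max x 0 - x := fun x => by
    rcases le_or_gt 0 x with h | h
    · rw [max_eq_left h, abs_of_nonneg h]; ring
    · rw [max_eq_right h.le, abs_of_neg h]; ring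
  simp_rw [hpointwise]
  rw [integral_sub (hf.pos_part.const_mul 2) hf, integral_const_mul]

lemma eLpNorm_one_eq_ofReal_integral_abs {f : Ω → ℝ} (hf : Integrable f μ) :
    eLpNorm f 1 μ = ENNReal.ofReal (∫ ω, |f ω| ∂μ) := by
  rw [eLpNorm_one_eq_lintegral_enorm, ← ofReal_integral_norm_eq_lintegral_enorm hf]
  simp only [Real.norm_eq_abs]

section Increments

variable {ℱ : Filtration ℕ m0} {X : ℕ → Ω → ℝ}

lemma integral_condExp_increment [SigmaFiniteFiltration μ ℱ] (hint : ∀ n, Integrable (X n) μ)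
    (n : ℕ) :
    ∫ ω, (μ[X (n + 1) - X n | ℱ n]) ω ∂μ = ∫ ω, X (n + 1) ω ∂μ - ∫ ω, X n ω ∂μ := by
  rw [integral_condExp (ℱ.le n)]
  exact integral_sub (hint (n + 1)) (hint n)

lemma integral_eq_add_sum_integral_condExp_increment [SigmaFiniteFiltration μ ℱ]
    (hint : ∀ n, Integrable (X n) μ) (n : ℕ) :
    ∫ ω, X n ω ∂μ =
      ∫ ω, X 0 ω ∂μ + ∑ k ∈ Finset.range n, ∫ ω, (μ[X (k + 1) - X k | ℱ k]) ω ∂μ := by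
  simp only [integral_condExp_increment (ℱ := ℱ) hint,
    Finset.sum_range_sub (fun k => ∫ ω, X k ω ∂μ)]
  ring

lemma integral_le_add_tsum_integral_max_condExp_increment [SigmaFiniteFiltration μ ℱ]
    (hint : ∀ n, Integrable (X n) μ)
    (hbpv : Summable fun n => ∫ ω, max ((μ[X (n + 1) - X n | ℱ n]) ω) 0 ∂μ) (n : ℕ) :
    ∫ ω, X n ω ∂μ ≤ ∫ ω, X 0 ω ∂μ + ∑' k, ∫ ω, max ((μ[X (k + 1) - X k | ℱ k]) ω) 0 ∂μ := by
  rw [integral_eq_add_sum_integral_condExp_increment (ℱ := ℱ) hint]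
  gcongr
  calc ∑ k ∈ Finset.range n, ∫ ω, (μ[X (k + 1) - X k | ℱ k]) ω ∂μ
      ≤ ∑ k ∈ Finset.range n, ∫ ω, max ((μ[X (k + 1) - X k | ℱ k]) ω) 0 ∂μ :=
        Finset.sum_le_sum fun k _ => integral_mono integrable_condExp
          integrable_condExp.pos_part fun ω => le_max_left _ _
    _ ≤ _ := hbpv.sum_le_tsum _ fun k _ => integral_nonneg fun ω => le_max_right _ _

lemma summable_integral_abs_condExp_increment [SigmaFiniteFiltration μ ℱ]
    (hint : ∀ n, Integrable (X n) μ) {c : ℝ} (hlow : ∀ n, c ≤ ∫ ω, X n ω ∂μ)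
    (hbpv : Summable fun n => ∫ ω, max ((μ[X (n + 1) - X n | ℱ n]) ω) 0 ∂μ) :
    Summable fun n => ∫ ω, |(μ[X (n + 1) - X n | ℱ n]) ω| ∂μ := by
  set T := ∑' n, ∫ ω, max ((μ[X (n + 1) - X n | ℱ n]) ω) 0 ∂μ
  refine summable_of_sum_range_le (fun n => integral_nonneg fun ω => abs_nonneg _)
    (c := 2 * T + ∫ ω, X 0 ω ∂μ - c) fun N => ?_
  have hpartial : ∑ n ∈ Finset.range N, ∫ ω, |(μ[X (n + 1) - X n | ℱ n]) ω| ∂μ =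
      2 * ∑ n ∈ Finset.range N, ∫ ω, max ((μ[X (n + 1) - X n | ℱ n]) ω) 0 ∂μ
        - (∫ ω, X N ω ∂μ - ∫ ω, X 0 ω ∂μ) := by
    simp only [integral_abs_eq_two_mul_integral_max_sub integrable_condExp,
      integral_condExp_increment hint]
    rw [Finset.sum_sub_distrib, Finset.sum_range_sub (fun n => ∫ ω, X n ω ∂μ), Finset.mul_sum]
  have hT : ∑ n ∈ Finset.range N, ∫ ω, max ((μ[X (n + 1) - X n | ℱ n]) ω) 0 ∂μ ≤ T :=
    hbpv.sum_le_tsum _ fun n _ => integral_nonneg fun ω => le_max_right _ _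
  linarith [hlow N]

lemma eLpNorm_predictablePart_le_tsum {p : ℝ≥0∞} (hp : 1 ≤ p) (n : ℕ) :
    eLpNorm (predictablePart X ℱ μ n) p μ ≤ ∑' k, eLpNorm (μ[X (k + 1) - X k | ℱ k]) p μ := by
  unfold predictablePart
  exact (eLpNorm_sum_le (fun k _ => integrable_condExp.aestronglyMeasurable) hp).trans
    (ENNReal.sum_le_tsum _)

lemma ae_tendsto_predictablePart
    (hS : ∑' n, eLpNorm (μ[X (n + 1) - X n | ℱ n]) 1 μ ≠ ∞) :
    ∀ᵐ ω ∂μ, Tendsto (fun n => predictablePart X ℱ μ n ω) atTop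
      (𝓝 (∑' n, (μ[X (n + 1) - X n | ℱ n]) ω)) := by
  filter_upwards [summable_norm_of_tsum_eLpNorm_ne_top le_rfl
    (fun n => integrable_condExp.aestronglyMeasurable) hS] with ω hω
  unfold predictablePart
  simpa only [Finset.sum_apply] using (Summable.of_norm hω).hasSum.tendsto_sum_nat

/-- An `L¹`-bounded quasimartingale converges almost surely. -/
theorem exists_ae_tendsto_of_bdd_of_tsum_eLpNorm_condExp_increment_ne_top
    [IsFiniteMeasure μ] (hadp : StronglyAdapted ℱ X) (hint : ∀ n, Integrable (X n) μ) {R : ℝ≥0}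
    (hbdd : ∀ n, eLpNorm (X n) 1 μ ≤ R)
    (hS : ∑' n, eLpNorm (μ[X (n + 1) - X n | ℱ n]) 1 μ ≠ ∞) :
    ∀ᵐ ω ∂μ, ∃ l, Tendsto (fun n => X n ω) atTop (𝓝 l) := by
  set S := ∑' n, eLpNorm (μ[X (n + 1) - X n | ℱ n]) 1 μ
  have hMbdd : ∀ n, eLpNorm (martingalePart X ℱ μ n) 1 μ ≤ (R + S.toNNReal : ℝ≥0) := fun n =>
    calc eLpNorm (X n - predictablePart X ℱ μ n) 1 μ
        ≤ eLpNorm (X n) 1 μ + eLpNorm (predictablePart X ℱ μ n) 1 μ :=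
          eLpNorm_sub_le (hint n).aestronglyMeasurable
            (Finset.aestronglyMeasurable_sum _
              fun k _ => integrable_condExp.aestronglyMeasurable) le_rfl
      _ ≤ R + S := add_le_add (hbdd n) (eLpNorm_predictablePart_le_tsum le_rfl n)
      _ = (R + S.toNNReal : ℝ≥0) := by rw [ENNReal.coe_add, ENNReal.coe_toNNReal hS]
  have hM := (martingale_martingalePart hadp hint).submartingale.exists_ae_tendsto_of_bdd hMbdd
  filter_upwards [hM, ae_tendsto_predictablePart hS] with ω ⟨l, hl⟩ hA
  refine ⟨l + ∑' n, (μ[X (n + 1) - X n | ℱ n]) ω, ?_⟩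
  exact (hl.add hA).congr fun n =>
    congr_fun (congr_fun (martingalePart_add_predictablePart ℱ μ X) n) ω

end Increments

end MeasureTheory

theorem stmt_11 {Ω : Type*} {m0 : MeasurableSpace Ω} {μ : Measure Ω}
    [IsProbabilityMeasure μ] (ℱ : Filtration ℕ m0)
    (X : ℕ → Ω → ℝ) (hadp : Adapted ℱ X)
    (hint : ∀ n, Integrable (X n) μ)
    (hpos : ∀ n ω, 0 ≤ X n ω)
    (hbpv : Summable fun n =>
      ∫ ω, max ((μ[X (n + 1) - X n | ℱ n]) ω) 0 ∂μ) :
    (Summable fun n => ∫ ω, |(μ[X (n + 1) - X n | ℱ n]) ω| ∂μ) ∧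
      ∀ᵐ ω ∂μ, ∃ l : ℝ, Tendsto (fun n => X n ω) atTop (nhds l) := by
  have hsum := summable_integral_abs_condExp_increment hint
    (fun n => integral_nonneg (hpos n)) hbpv
  refine ⟨hsum, ?_⟩
  have hbdd : ∀ n, eLpNorm (X n) 1 μ ≤ ENNReal.ofReal
      (∫ ω, X 0 ω ∂μ + ∑' k, ∫ ω, max ((μ[X (k + 1) - X k | ℱ k]) ω) 0 ∂μ) := fun n => by
    rw [eLpNorm_one_eq_ofReal_integral_abs (hint n)]
    simp_rw [abs_of_nonneg (hpos n _)]
    exact ENNReal.ofReal_le_ofReal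
      (integral_le_add_tsum_integral_max_condExp_increment hint hbpv n)
  have hS : ∑' n, eLpNorm (μ[X (n + 1) - X n | ℱ n]) 1 μ ≠ ⊤ := by
    simp_rw [eLpNorm_one_eq_ofReal_integral_abs integrable_condExp]
    rw [← ENNReal.ofReal_tsum_of_nonneg (fun n => integral_nonneg fun ω => abs_nonneg _) hsum]
    exact ENNReal.ofReal_ne_top
  exact exists_ae_tendsto_of_bdd_of_tsum_eLpNorm_condExp_increment_ne_top
    hadp.stronglyAdapted hint hbdd hS
end
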